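/- arXiv:2409.14398 — 4 statements merged into one kernel-verified Lean document; each statement's English description precedes it below -/
import Mathlib

section
/- In a graph of maximum degree at most d, for any vertex v and any positive integer m, the number of subtrees of the graph on m vertices containing v is at most (e·d)^(m-1). -/
/-!
Explore a connected set `S ∋ v` greedily from `v`, always adding the least vertex (in a fixed
linear order of `V`) adjacent to what has been explored. Each of the `#S - 1` later vertices is
recorded by the pair (index of its earliest explored neighbour, its position among the at most
`d` neighbours of that vertex). Knowing the vertices explored so far, the code tells exactly which
vertices are adjacent to them, hence which vertex comes next; so the code determines `S`. It is an
`(m - 1)`-subset of `[0, m - 1) × [0, d)`, and `C((m - 1) d, m - 1) ≤ (e d) ^ (m - 1)`.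
-/

open Finset

theorem Nat.choose_le_exp_one_mul_div_pow (n k : ℕ) :
    (n.choose k : ℝ) ≤ (Real.exp 1 * n / k) ^ k := by
  obtain rfl | hk := k.eq_zero_or_pos
  · simp
  have hexp : (k : ℝ) ^ k / k.factorial ≤ Real.exp 1 ^ k := by
    rw [← Real.exp_nat_mul, mul_one]
    exact Real.pow_div_factorial_le_exp (x := k) k.cast_nonneg k
  rw [div_pow, mul_pow, le_div_iff₀ (by positivity)]
  calc (n.choose k : ℝ) * k ^ k ≤ n ^ k / k.factorial * k ^ k := by
        gcongr; exact Nat.choose_le_pow_div k n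
    _ = n ^ k * (k ^ k / k.factorial) := by ring
    _ ≤ n ^ k * Real.exp 1 ^ k := by gcongr
    _ = Real.exp 1 ^ k * n ^ k := mul_comm _ _

namespace SimpleGraph

variable {V : Type*} [LinearOrder V] {G : SimpleGraph V} [DecidableRel G.Adj]

section Neighbors

variable [Fintype V]

variable (G) in
def nthNeighbor (u : V) (i : ℕ) : V := ((G.neighborFinset u).sort (· ≤ ·)).getD i u

variable (G) in
def neighborIndex (u w : V) : ℕ := ((G.neighborFinset u).sort (· ≤ ·)).idxOf w

lemma neighborIndex_lt_degree {u w : V} (h : G.Adj u w) : G.neighborIndex u w < G.degree u := by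
  rw [← card_neighborFinset_eq_degree, ← length_sort (· ≤ ·), neighborIndex,
    List.idxOf_lt_length_iff, mem_sort, mem_neighborFinset]
  exact h

lemma nthNeighbor_neighborIndex {u w : V} (h : G.Adj u w) :
    G.nthNeighbor u (G.neighborIndex u w) = w := by
  have hlt : G.neighborIndex u w < ((G.neighborFinset u).sort (· ≤ ·)).length := by
    rw [length_sort, card_neighborFinset_eq_degree]; exact neighborIndex_lt_degree h
  rw [nthNeighbor, List.getD_eq_getElem _ _ hlt]
  exact List.getElem_idxOf hlt

end Neighbors

variable (G) in
def boundaryIn (S A : Finset V) : Finset V := {w ∈ S \ A | ∃ u ∈ A, G.Adj u w}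

lemma boundaryIn_subset {S A : Finset V} : G.boundaryIn S A ⊆ S \ A := filter_subset _ _

lemma boundaryIn_nonempty {S A : Finset V} (hS : (G.induce (S : Set V)).Connected)
    (hAS : A ⊆ S) (hA : A.Nonempty) (hne : A ≠ S) : (G.boundaryIn S A).Nonempty := by
  obtain ⟨u, hu⟩ := hA
  obtain ⟨w, hwS, hwA⟩ := not_subset.1 fun h => hne (subset_antisymm hAS h)
  obtain ⟨p⟩ := hS.preconnected ⟨u, hAS hu⟩ ⟨w, hwS⟩
  obtain ⟨e, -, he₁, he₂⟩ := p.exists_boundary_dart {x | (x : V) ∈ A} hu hwA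
  exact ⟨e.snd, mem_filter.2 ⟨mem_sdiff.2 ⟨e.snd.2, he₂⟩, e.fst, he₁, e.adj⟩⟩

variable (G) in
-- `v` is a junk value, taken only when the boundary is empty.
def nextVertex (S : Finset V) (v : V) (A : Finset V) : V := (G.boundaryIn S A).min.untopD v

lemma nextVertex_mem_boundaryIn {S A : Finset V} {v : V} (h : (G.boundaryIn S A).Nonempty) :
    G.nextVertex S v A ∈ G.boundaryIn S A := by
  rw [nextVertex, ← coe_min' h]
  exact min'_mem _ h

variable (G) in
def exploreSet (S : Finset V) (v : V) : ℕ → Finset V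
  | 0 => {v}
  | k + 1 => insert (G.nextVertex S v (exploreSet S v k)) (exploreSet S v k)

variable (G) in
def exploreSeq (S : Finset V) (v : V) : ℕ → V
  | 0 => v
  | k + 1 => G.nextVertex S v (G.exploreSet S v k)

section Exploration

variable {S : Finset V} {v : V}

lemma exploreSet_eq_image : ∀ k, G.exploreSet S v k = (range (k + 1)).image (G.exploreSeq S v)
  | 0 => rfl
  | k + 1 => by rw [range_add_one, image_insert, ← exploreSet_eq_image k]; rfl

lemma exploreSet_subset (hv : v ∈ S) : ∀ k, G.exploreSet S v k ⊆ S
  | 0 => singleton_subset_iff.2 hv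
  | k + 1 => by
    refine insert_subset ?_ (exploreSet_subset hv k)
    by_cases h : (G.boundaryIn S (G.exploreSet S v k)).Nonempty
    · exact (mem_sdiff.1 (boundaryIn_subset (nextVertex_mem_boundaryIn h))).1
    · rw [not_nonempty_iff_eq_empty] at h
      rwa [nextVertex, h]

lemma exploreSeq_mem_exploreSet_of_le {j k : ℕ} (h : j ≤ k) :
    G.exploreSeq S v j ∈ G.exploreSet S v k := by
  rw [exploreSet_eq_image]
  exact mem_image_of_mem _ (mem_range.2 (Nat.lt_succ_of_le h))

variable (hS : (G.induce (S : Set V)).Connected) (hv : v ∈ S)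
include hS hv

lemma exploreSeq_succ_mem_boundaryIn {k : ℕ} (h : G.exploreSet S v k ≠ S) :
    G.exploreSeq S v (k + 1) ∈ G.boundaryIn S (G.exploreSet S v k) :=
  nextVertex_mem_boundaryIn <| boundaryIn_nonempty hS (exploreSet_subset hv k)
    ⟨v, exploreSeq_mem_exploreSet_of_le k.zero_le⟩ h

lemma card_exploreSet : ∀ k, k < #S → #(G.exploreSet S v k) = k + 1
  | 0, _ => card_singleton v
  | k + 1, hk => by
    have ih := card_exploreSet k (by omega)
    have hne : G.exploreSet S v k ≠ S := fun h => by rw [h] at ih; omega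
    have hnew := (mem_sdiff.1 (boundaryIn_subset (exploreSeq_succ_mem_boundaryIn hS hv hne))).2
    rw [exploreSet_eq_image, range_add_one, image_insert, ← exploreSet_eq_image,
      card_insert_of_notMem hnew, ih]

lemma exploreSeq_succ_mem_boundaryIn_of_lt {k : ℕ} (hk : k + 1 < #S) :
    G.exploreSeq S v (k + 1) ∈ G.boundaryIn S (G.exploreSet S v k) :=
  exploreSeq_succ_mem_boundaryIn hS hv fun h => by
    have := card_exploreSet hS hv k (by omega); rw [h] at this; omega

lemma image_exploreSeq : (range #S).image (G.exploreSeq S v) = S := by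
  have hpos : 0 < #S := card_pos.2 ⟨v, hv⟩
  have hsub := exploreSet_subset (G := G) hv (#S - 1)
  have hcard := card_exploreSet hS hv (#S - 1) (by omega)
  rw [exploreSet_eq_image, Nat.sub_add_cancel hpos] at hsub hcard
  exact eq_of_subset_of_card_le hsub (by rw [hcard])

lemma injOn_exploreSeq : Set.InjOn (G.exploreSeq S v) (range #S) :=
  card_image_iff.1 (by rw [image_exploreSeq hS hv, card_range])

lemma exists_adj_exploreSeq {k : ℕ} (hk₀ : 0 < k) (hk : k < #S) :
    ∃ j < k, G.Adj (G.exploreSeq S v j) (G.exploreSeq S v k) := by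
  obtain ⟨k, rfl⟩ : ∃ k', k = k' + 1 := ⟨k - 1, by omega⟩
  obtain ⟨-, u, hu, hadj⟩ := mem_filter.1 (exploreSeq_succ_mem_boundaryIn_of_lt hS hv hk)
  rw [exploreSet_eq_image] at hu
  obtain ⟨j, hj, rfl⟩ := mem_image.1 hu
  exact ⟨j, by simpa using hj, hadj⟩

end Exploration

variable (G) in
noncomputable def parentIdx (S : Finset V) (v : V) (k : ℕ) : ℕ :=
  sInf {j | G.Adj (G.exploreSeq S v j) (G.exploreSeq S v k)}

section TreeCode

variable {S : Finset V} {v : V}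

lemma parentIdx_lt_and_adj (hS : (G.induce (S : Set V)).Connected) (hv : v ∈ S) {k : ℕ}
    (hk₀ : 0 < k) (hk : k < #S) :
    G.parentIdx S v k < k ∧
      G.Adj (G.exploreSeq S v (G.parentIdx S v k)) (G.exploreSeq S v k) := by
  obtain ⟨j, hjk, hadj⟩ := exists_adj_exploreSeq hS hv hk₀ hk
  have hne : {j | G.Adj (G.exploreSeq S v j) (G.exploreSeq S v k)}.Nonempty := ⟨j, hadj⟩
  exact ⟨(Nat.sInf_le hadj).trans_lt hjk, Nat.sInf_mem hne⟩

variable [Fintype V]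

variable (G) in
noncomputable def treeCode (S : Finset V) (v : V) : Finset (ℕ × ℕ) :=
  (Icc 1 (#S - 1)).image fun k =>
    (G.parentIdx S v k,
      G.neighborIndex (G.exploreSeq S v (G.parentIdx S v k)) (G.exploreSeq S v k))

variable (G) in
def codeChildren (C : Finset (ℕ × ℕ)) (f : ℕ → V) (k : ℕ) : Finset V :=
  {p ∈ C | p.1 ≤ k}.image fun p => G.nthNeighbor (f p.1) p.2

variable (hS : (G.induce (S : Set V)).Connected) (hv : v ∈ S)
include hS hv

lemma nthNeighbor_treeCode {k : ℕ} (hk₀ : 0 < k) (hk : k < #S) :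
    G.nthNeighbor (G.exploreSeq S v (G.parentIdx S v k))
      (G.neighborIndex (G.exploreSeq S v (G.parentIdx S v k)) (G.exploreSeq S v k)) =
    G.exploreSeq S v k :=
  nthNeighbor_neighborIndex (parentIdx_lt_and_adj hS hv hk₀ hk).2

lemma card_treeCode : #(G.treeCode S v) = #S - 1 := by
  rw [treeCode, card_image_of_injOn, Nat.card_Icc, Nat.add_sub_cancel]
  intro k hk l hl hkl
  simp only [coe_Icc, Set.mem_Icc, Prod.mk.injEq] at hk hl hkl
  refine injOn_exploreSeq hS hv (by simp; omega) (by simp; omega) ?_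
  rw [← nthNeighbor_treeCode hS hv (k := k) (by omega) (by omega),
    ← nthNeighbor_treeCode hS hv (k := l) (by omega) (by omega), hkl.2, hkl.1]

lemma treeCode_subset {d : ℕ} (hdeg : ∀ w, G.degree w ≤ d) :
    G.treeCode S v ⊆ range (#S - 1) ×ˢ range d := by
  intro p hp
  obtain ⟨k, hk, rfl⟩ := mem_image.1 hp
  rw [mem_Icc] at hk
  have hpar := parentIdx_lt_and_adj hS hv (k := k) (by omega) (by omega)
  simp only [mem_product, mem_range]
  exact ⟨by omega, (neighborIndex_lt_degree hpar.2).trans_le (hdeg _)⟩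

lemma mem_codeChildren_treeCode {k : ℕ} {w : V} :
    w ∈ G.codeChildren (G.treeCode S v) (G.exploreSeq S v) k ↔
      ∃ l, 0 < l ∧ l < #S ∧ G.parentIdx S v l ≤ k ∧ G.exploreSeq S v l = w := by
  simp only [codeChildren, treeCode, mem_image, mem_filter, mem_Icc]
  constructor
  · rintro ⟨_, ⟨⟨l, hl, rfl⟩, hpar⟩, rfl⟩
    refine ⟨l, by omega, by omega, hpar, ?_⟩
    exact (nthNeighbor_treeCode hS hv (by omega) (by omega)).symm
  · rintro ⟨l, hl₀, hl, hpar, rfl⟩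
    exact ⟨_, ⟨⟨l, ⟨hl₀, by omega⟩, rfl⟩, hpar⟩, nthNeighbor_treeCode hS hv hl₀ hl⟩

lemma boundaryIn_exploreSet_eq (k : ℕ) :
    G.boundaryIn S (G.exploreSet S v k) =
      G.codeChildren (G.treeCode S v) (G.exploreSeq S v) k \ G.exploreSet S v k := by
  ext w
  simp only [boundaryIn, mem_filter, mem_sdiff, mem_codeChildren_treeCode hS hv]
  constructor
  · rintro ⟨⟨hwS, hwE⟩, u, huE, hadj⟩
    rw [← image_exploreSeq hS hv] at hwS
    obtain ⟨l, hl, rfl⟩ := mem_image.1 hwS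
    rw [exploreSet_eq_image] at huE
    obtain ⟨j, hj, rfl⟩ := mem_image.1 huE
    have hkl : k < l := not_le.1 fun h => hwE (exploreSeq_mem_exploreSet_of_le h)
    simp only [mem_range] at hl hj
    exact ⟨⟨l, by omega, hl, (Nat.sInf_le hadj).trans (by omega), rfl⟩, hwE⟩
  · rintro ⟨⟨l, hl₀, hl, hpar, rfl⟩, hwE⟩
    refine ⟨⟨?_, hwE⟩, _, exploreSeq_mem_exploreSet_of_le hpar,
      (parentIdx_lt_and_adj hS hv hl₀ hl).2⟩
    exact (image_exploreSeq hS hv).subset (mem_image_of_mem _ (mem_range.2 hl))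

end TreeCode

variable [Fintype V] {S S' : Finset V} {v : V}

lemma exploreSeq_eq_of_treeCode_eq (hS : (G.induce (S : Set V)).Connected)
    (hS' : (G.induce (S' : Set V)).Connected) (hv : v ∈ S) (hv' : v ∈ S')
    (h : G.treeCode S v = G.treeCode S' v) : G.exploreSeq S v = G.exploreSeq S' v := by
  suffices ∀ k, ∀ j ≤ k, G.exploreSeq S v j = G.exploreSeq S' v j from
    funext fun j => this j j le_rfl
  intro k
  induction k with
  | zero => intro j hj; rw [Nat.le_zero.1 hj]; rfl
  | succ k ih =>
    intro j hj
    obtain hj | rfl := Nat.le_succ_iff.1 hj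
    · exact ih j hj
    have hE : G.exploreSet S v k = G.exploreSet S' v k := by
      rw [exploreSet_eq_image, exploreSet_eq_image]
      exact image_congr fun j hj => ih j (Nat.lt_succ_iff.1 (mem_range.1 hj))
    have hC : G.codeChildren (G.treeCode S v) (G.exploreSeq S v) k =
        G.codeChildren (G.treeCode S' v) (G.exploreSeq S' v) k := by
      rw [h]
      exact image_congr fun p hp => by rw [ih p.1 (mem_filter.1 hp).2]
    change G.nextVertex S v _ = G.nextVertex S' v _
    rw [nextVertex, nextVertex, boundaryIn_exploreSet_eq hS hv,
      boundaryIn_exploreSet_eq hS' hv', hE, hC]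

lemma treeCode_injOn (v : V) :
    Set.InjOn (G.treeCode · v) {S | v ∈ S ∧ (G.induce (S : Set V)).Connected} := by
  rintro S ⟨hv, hS⟩ S' ⟨hv', hS'⟩ h
  have hcard : #S = #S' := by
    have := congrArg card h
    rw [card_treeCode hS hv, card_treeCode hS' hv'] at this
    have := card_pos.2 ⟨v, hv⟩
    have := card_pos.2 ⟨v, hv'⟩
    omega
  rw [← image_exploreSeq hS hv, ← image_exploreSeq hS' hv', hcard,
    exploreSeq_eq_of_treeCode_eq hS hS' hv hv' h]

end SimpleGraph

theorem SimpleGraph.ncard_connected_le_choose {V : Type*} [Fintype V] (G : SimpleGraph V)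
    [DecidableRel G.Adj] {d : ℕ} (hdeg : ∀ w, G.degree w ≤ d) (v : V) (m : ℕ) :
    ({S : Finset V | v ∈ S ∧ S.card = m ∧ (G.induce (S : Set V)).Connected} :
      Set (Finset V)).ncard ≤ ((m - 1) * d).choose (m - 1) := by
  let _ : LinearOrder V := LinearOrder.lift' (Fintype.equivFin V) (Fintype.equivFin V).injective
  let codes := (range (m - 1) ×ˢ range d).powersetCard (m - 1)
  calc _ ≤ (codes : Set (Finset (ℕ × ℕ))).ncard := by
        refine Set.ncard_le_ncard_of_injOn (G.treeCode · v) ?_ ((G.treeCode_injOn v).mono ?_)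
        · rintro S ⟨hv, rfl, hS⟩
          exact mem_powersetCard.2 ⟨treeCode_subset hS hv hdeg, card_treeCode hS hv⟩
        · exact fun S hS => ⟨hS.1, hS.2.2⟩
    _ = ((m - 1) * d).choose (m - 1) := by
        rw [Set.ncard_coe_finset, card_powersetCard, card_product, card_range, card_range]

theorem stmt_3_general {V : Type*} [Fintype V] (G : SimpleGraph V)
    [DecidableRel G.Adj] (d : ℕ) (hdeg : ∀ w : V, G.degree w ≤ d)
    (v : V) (m : ℕ) :
    (({S : Finset V | v ∈ S ∧ S.card = m ∧ (G.induce (S : Set V)).Connected} :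
        Set (Finset V)).ncard : ℝ) ≤ (Real.exp 1 * d) ^ (m - 1) := by
  calc _ ≤ (((m - 1) * d).choose (m - 1) : ℝ) := by
        exact_mod_cast G.ncard_connected_le_choose hdeg v m
    _ ≤ (Real.exp 1 * ((m - 1) * d : ℕ) / (m - 1 : ℕ)) ^ (m - 1) :=
        Nat.choose_le_exp_one_mul_div_pow _ _
    _ = (Real.exp 1 * d) ^ (m - 1) := by
        obtain hk | hk := eq_or_ne (m - 1) 0
        · rw [hk, pow_zero, pow_zero]
        · push_cast
          field_simp

/-- The number of connected vertex subsets of size `m` containing a fixed vertex `v`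
(i.e. subtrees on `m` vertices rooted at `v`) in a graph of maximum degree at most `d`
is at most `(e·d)^(m-1)`. -/
theorem stmt_3 {V : Type*} [Fintype V] [DecidableEq V] (G : SimpleGraph V)
    [DecidableRel G.Adj] (d : ℕ) (hdeg : ∀ w : V, G.degree w ≤ d)
    (v : V) (m : ℕ) (hm : 1 ≤ m) :
    (({S : Finset V | v ∈ S ∧ S.card = m ∧ (G.induce (S : Set V)).Connected} :
        Set (Finset V)).ncard : ℝ) ≤ (Real.exp 1 * d) ^ (m - 1) :=
  stmt_3_general G d hdeg v m
end

section
/- Let G be a graph and p ∈ (0,1), and consider the random subgraph G_p obtained by retaining each edge independently with probability p. For any edge uv of a d-regular graph G, the probability that both u and v have degree less than k in G_p is at most P(Bin(d,p) < k) · P(Bin(d-1,p) < k). -/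
/-!
The edges at `u` and the edges at `v` other than `uv` form disjoint sets of sizes `d` and `d - 1`,
so the numbers of retained edges in them are independent `Bin(d, p)` and `Bin(d - 1, p)` variables.
The first is the degree of `u` in `G_p` and the second is at most the degree of `v`, so the event
that both degrees are below `k` is contained in the event that both counts are below `k`.
-/

open MeasureTheory ProbabilityTheory Finset
open scoped ENNReal NNReal

set_option linter.deprecated false

noncomputable def percDeg {V : Type*} (G : SimpleGraph V) (ω : G.edgeSet → Bool) (u : V) : ℕ :=
  {e : G.edgeSet | u ∈ (e : Sym2 V) ∧ ω e = true}.ncard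

theorem Measure.pi_map_restrict {ι : Type*} [Fintype ι] {X : ι → Type*}
    [∀ i, MeasurableSpace (X i)] (μ : ∀ i, Measure (X i)) [∀ i, IsProbabilityMeasure (μ i)]
    (A : Finset ι) : (Measure.pi μ).map A.restrict = Measure.pi fun i : A => μ i := by
  rw [← Measure.infinitePi_eq_pi, Measure.infinitePi_map_restrict]

theorem Measure.pi_restrict_mem_and_restrict_mem {ι : Type*} [Fintype ι] {X : ι → Type*}
    [∀ i, MeasurableSpace (X i)] (μ : ∀ i, Measure (X i)) [∀ i, IsProbabilityMeasure (μ i)]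
    {A B : Finset ι} (hAB : Disjoint A B) {S : Set (∀ i : A, X i)} {T : Set (∀ i : B, X i)}
    (hS : MeasurableSet S) (hT : MeasurableSet T) :
    Measure.pi μ {ω | A.restrict ω ∈ S ∧ B.restrict ω ∈ T} =
      Measure.pi (fun i : A => μ i) S * Measure.pi (fun i : B => μ i) T := by
  have hindep : IndepFun A.restrict B.restrict (Measure.pi μ) :=
    (iIndepFun_pi (X := fun _ => id) fun _ => aemeasurable_id).indepFun_finset A B hAB
      measurable_pi_apply
  change Measure.pi μ (A.restrict ⁻¹' S ∩ B.restrict ⁻¹' T) = _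
  rw [hindep.measure_inter_preimage_eq_mul _ _ hS hT,
    ← Measure.map_apply (Finset.measurable_restrict A) hS,
    ← Measure.map_apply (Finset.measurable_restrict B) hT,
    Measure.pi_map_restrict, Measure.pi_map_restrict]

theorem Finset.card_filter_restrict {α : Type*} (C : Finset α) (ω : α → Bool) :
    #{a | C.restrict ω a} = #{a ∈ C | ω a} := by
  rw [card_filter, card_filter, univ_eq_attach]
  exact sum_attach C (fun a => if ω a then 1 else 0)

section Bernoulli

variable {α : Type*} [Fintype α] (q : ℝ≥0) (hq : q ≤ 1)

theorem Measure.pi_bernoulli_singleton (σ : α → Bool) :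
    Measure.pi (fun _ : α => (PMF.bernoulli q hq).toMeasure) {σ} =
      (q : ℝ≥0∞) ^ #{a | σ a} * (1 - (q : ℝ≥0∞)) ^ (Fintype.card α - #{a | σ a}) := by
  rw [← Set.univ_pi_singleton σ, Measure.pi_pi, ← card_univ,
    ← card_filter_add_card_filter_not (s := univ) (fun a => σ a), Nat.add_sub_cancel_left]
  simp only [PMF.toMeasure_apply_singleton _ _ (measurableSet_singleton _), PMF.bernoulli_apply,
    Bool.cond_eq_ite, apply_ite ENNReal.ofNNReal, prod_ite, prod_const, ENNReal.coe_sub,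
    ENNReal.coe_one]

theorem card_filter_card_filter_eq_choose [DecidableEq α] (i : ℕ) :
    #{σ : α → Bool | #{a | σ a} = i} = (Fintype.card α).choose i := by
  rw [← Finset.card_univ, ← Finset.card_powersetCard]
  refine Finset.card_nbij (fun σ => ({a | σ a} : Finset α)) ?_ ?_ ?_
  · intro σ hσ; simp_all [mem_powersetCard]
  · intro σ _ τ _ h; funext a; simpa using congrArg (a ∈ ·) h
  · intro s hs
    refine ⟨fun a => decide (a ∈ s), ?_, ?_⟩ <;> simp_all [mem_powersetCard]

theorem Measure.pi_bernoulli_card_lt (k : ℕ) :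
    Measure.pi (fun _ : α => (PMF.bernoulli q hq).toMeasure) {σ | #{a | σ a} < k} =
      ∑ i ∈ range k, ((Fintype.card α).choose i : ℝ≥0∞) * (q : ℝ≥0∞) ^ i *
        (1 - (q : ℝ≥0∞)) ^ (Fintype.card α - i) := by
  classical
  rw [← coe_filter_univ, ← sum_measure_singleton,
    sum_congr rfl fun σ _ => Measure.pi_bernoulli_singleton q hq σ,
    ← sum_fiberwise_of_maps_to' (g := fun σ : α → Bool => #{a | σ a}) (t := range k) (by simp)
      (fun j => (q : ℝ≥0∞) ^ j * (1 - (q : ℝ≥0∞)) ^ (Fintype.card α - j))]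
  refine sum_congr rfl fun i hi => ?_
  rw [filter_filter, filter_congr fun σ _ => and_iff_right_of_imp fun h => h ▸ mem_range.1 hi,
    sum_const, card_filter_card_filter_eq_choose, nsmul_eq_mul, mul_assoc]

theorem Measure.pi_bernoulli_card_filter_lt_and_card_filter_lt {A B : Finset α}
    (hAB : Disjoint A B) (k l : ℕ) :
    Measure.pi (fun _ : α => (PMF.bernoulli q hq).toMeasure)
        {ω | #{a ∈ A | ω a} < k ∧ #{a ∈ B | ω a} < l} =
      (∑ i ∈ range k, ((#A).choose i : ℝ≥0∞) * (q : ℝ≥0∞) ^ i * (1 - (q : ℝ≥0∞)) ^ (#A - i)) *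
        ∑ i ∈ range l, ((#B).choose i : ℝ≥0∞) * (q : ℝ≥0∞) ^ i * (1 - (q : ℝ≥0∞)) ^ (#B - i) := by
  have hevent : {ω : α → Bool | #{a ∈ A | ω a} < k ∧ #{a ∈ B | ω a} < l} =
      {ω | A.restrict ω ∈ {σ | #{a | σ a} < k} ∧ B.restrict ω ∈ {σ | #{a | σ a} < l}} := by
    ext ω
    simp only [Set.mem_setOf_eq, card_filter_restrict]
  rw [hevent, Measure.pi_restrict_mem_and_restrict_mem _ hAB .of_discrete .of_discrete,
    Measure.pi_bernoulli_card_lt, Measure.pi_bernoulli_card_lt, Fintype.card_coe,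
    Fintype.card_coe]

end Bernoulli

theorem ENNReal.ofReal_sum_choose_mul_pow_mul_pow {p : ℝ} (hp0 : 0 ≤ p) (hp1 : p ≤ 1) (n k : ℕ) :
    ENNReal.ofReal (∑ i ∈ range k, (n.choose i : ℝ) * p ^ i * (1 - p) ^ (n - i)) =
      ∑ i ∈ range k,
        (n.choose i : ℝ≥0∞) * ENNReal.ofReal p ^ i * (1 - ENNReal.ofReal p) ^ (n - i) := by
  have h1p : 0 ≤ 1 - p := sub_nonneg.2 hp1
  rw [ENNReal.ofReal_sum_of_nonneg fun i _ => by positivity]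
  refine sum_congr rfl fun i _ => ?_
  rw [ENNReal.ofReal_mul (by positivity), ENNReal.ofReal_mul (by positivity),
    ENNReal.ofReal_pow hp0, ENNReal.ofReal_pow h1p, ENNReal.ofReal_natCast,
    ENNReal.ofReal_sub _ hp0, ENNReal.ofReal_one]

section Graph

variable {V : Type*} [DecidableEq V] (G : SimpleGraph V) [Fintype G.edgeSet]

theorem percDeg_eq_card_filter (ω : G.edgeSet → Bool) (u : V) :
    percDeg G ω u = #{e : G.edgeSet | u ∈ (e : Sym2 V) ∧ ω e} := by
  rw [percDeg, ← Set.ncard_coe_finset, coe_filter_univ]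

theorem card_filter_mem_edge [Fintype V] [DecidableRel G.Adj] (u : V) :
    #{e : G.edgeSet | u ∈ (e : Sym2 V)} = G.degree u := by
  rw [← G.card_incidenceFinset_eq_degree, ← card_map (Function.Embedding.subtype _)]
  congr 1
  ext e
  simp [SimpleGraph.incidenceSet, and_comm]

theorem card_filter_notMem_and_mem_edge [Fintype V] [DecidableRel G.Adj] {u v : V}
    (huv : G.Adj u v) :
    #{e : G.edgeSet | u ∉ (e : Sym2 V) ∧ v ∈ (e : Sym2 V)} = G.degree v - 1 := by
  have hsplit := card_filter_add_card_filter_not (s := {e : G.edgeSet | v ∈ (e : Sym2 V)})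
    (fun e => u ∈ (e : Sym2 V))
  have hedge : ({e : G.edgeSet | v ∈ (e : Sym2 V) ∧ u ∈ (e : Sym2 V)} : Finset _) =
      {⟨s(u, v), huv⟩} := by
    ext e
    simp [Sym2.mem_and_mem_iff huv.ne', Subtype.ext_iff, Sym2.eq_swap]
  rw [filter_filter, filter_filter, hedge, card_singleton, card_filter_mem_edge] at hsplit
  simp_rw [and_comm (a := u ∉ _)]
  omega

end Graph

theorem stmt_4_general {V : Type*} [Fintype V] (G : SimpleGraph V)
    [DecidableRel G.Adj] [Fintype G.edgeSet] (d k : ℕ)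
    (hreg : ∀ w : V, G.degree w = d) (p : ℝ) (hp0 : 0 < p) (hp1 : p < 1)
    (u v : V) (huv : G.Adj u v) :
    (Measure.pi fun _ : G.edgeSet =>
        (PMF.bernoulli (Real.toNNReal p) (Real.toNNReal_le_one.mpr hp1.le)).toMeasure)
      {ω : G.edgeSet → Bool | percDeg G ω u < k ∧ percDeg G ω v < k} ≤
    ENNReal.ofReal
      ((∑ i ∈ Finset.range k, (d.choose i : ℝ) * p ^ i * (1 - p) ^ (d - i)) *
        (∑ i ∈ Finset.range k, ((d - 1).choose i : ℝ) * p ^ i * (1 - p) ^ (d - 1 - i))) := by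
  classical
  set A : Finset G.edgeSet := {e | u ∈ (e : Sym2 V)}
  set B : Finset G.edgeSet := {e | u ∉ (e : Sym2 V) ∧ v ∈ (e : Sym2 V)}
  have hAB : Disjoint A B := disjoint_filter.2 fun _ _ hu hv => hv.1 hu
  have hevent : {ω : G.edgeSet → Bool | percDeg G ω u < k ∧ percDeg G ω v < k} ⊆
      {ω | #{e ∈ A | ω e} < k ∧ #{e ∈ B | ω e} < k} := by
    rintro ω ⟨hu, hv⟩
    rw [percDeg_eq_card_filter] at hu hv
    refine ⟨by rwa [filter_filter], lt_of_le_of_lt (card_le_card fun e => ?_) hv⟩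
    simp +contextual [B]
  calc _ ≤ _ := measure_mono hevent
    _ = _ := Measure.pi_bernoulli_card_filter_lt_and_card_filter_lt _ _ hAB k k
    _ = _ := by
      rw [card_filter_mem_edge, card_filter_notMem_and_mem_edge G huv, hreg, hreg,
        ENNReal.ofReal_mul (sum_nonneg fun i _ => by have := sub_nonneg.2 hp1.le; positivity),
        ENNReal.ofReal_sum_choose_mul_pow_mul_pow hp0.le hp1.le,
        ENNReal.ofReal_sum_choose_mul_pow_mul_pow hp0.le hp1.le]
      -- `ENNReal.ofReal p` is by definition the coercion of `p.toNNReal`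
      rfl

/-- For an edge `uv` of a `d`-regular graph `G`, in bond percolation with parameter `p`,
the probability that both `u` and `v` have degree less than `k` is at most
`P(Bin(d,p) < k) · P(Bin(d-1,p) < k)`. -/
theorem stmt_4 {V : Type*} [Fintype V] [DecidableEq V] (G : SimpleGraph V)
    [DecidableRel G.Adj] [Fintype G.edgeSet] (d k : ℕ) (hk : 1 ≤ k)
    (hreg : ∀ w : V, G.degree w = d) (p : ℝ) (hp0 : 0 < p) (hp1 : p < 1)
    (u v : V) (huv : G.Adj u v) :
    (Measure.pi fun _ : G.edgeSet =>
        (PMF.bernoulli (Real.toNNReal p) (Real.toNNReal_le_one.mpr hp1.le)).toMeasure)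
      {ω : G.edgeSet → Bool | percDeg G ω u < k ∧ percDeg G ω v < k} ≤
    ENNReal.ofReal
      ((∑ i ∈ Finset.range k, (d.choose i : ℝ) * p ^ i * (1 - p) ^ (d - i)) *
        (∑ i ∈ Finset.range k, ((d - 1).choose i : ℝ) * p ^ i * (1 - p) ^ (d - 1 - i))) :=
  stmt_4_general G d k hreg p hp0 hp1 u v huv
end

section
/- In the graph G of the previous construction (cliques minus matchings attached to an expander), if additionally every U ⊆ V(H) with |U| ≤ εd/3 satisfies e_H(U,Uᶜ) ≥ (1-ε)d₁|U|, then every U ⊆ V(G) with |U| ≤ εd/3 satisfies e_G(U, Uᶜ) ≥ (1-ε)d|U|. -/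
/-- The number of edges of `G` with one endpoint in `U` and the other outside `U`. -/
noncomputable def edgeBoundary {V : Type*} (G : SimpleGraph V) (U : Set V) : ℕ :=
  {p : V × V | p.1 ∈ U ∧ p.2 ∉ U ∧ G.Adj p.1 p.2}.ncard

/-- The graph `G` obtained from `H` by attaching to each vertex `v` of `H` a copy `F(v)`
of the complete graph on `d+1` vertices minus the matching `M`, and joining `v` to both
endpoints of every edge of `M`. -/
def tightGraph (d : ℕ) {VH : Type*} (H : SimpleGraph VH) (M : SimpleGraph (Fin (d + 1))) :
    SimpleGraph (VH ⊕ VH × Fin (d + 1)) :=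
  SimpleGraph.fromRel fun x y =>
    match x, y with
    | Sum.inl u, Sum.inl v => H.Adj u v
    | Sum.inl u, Sum.inr (v, i) => u = v ∧ i ∈ M.support
    | Sum.inr (u, i), Sum.inr (v, j) => u = v ∧ i ≠ j ∧ ¬M.Adj i j
    | Sum.inr _, Sum.inl _ => False

/-!
Every vertex of `tightGraph d H M` has degree at least `d`: a vertex `v` of `H` has `d₁`
neighbours in `H` and `d - d₁` matched neighbours in its gadget, and a gadget vertex misses only
itself and its matching partner, the latter being compensated by the edge to `v`. A set `U` with
`|U| ≤ εd` absorbs at most `|U| - 1 ≤ εd` of the edges at each of its vertices, so at least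
`(1 - ε)d` of them leave `U`.
-/

open Finset

section EdgeBoundary

variable {V : Type*} [Finite V] (G : SimpleGraph V) (U : Finset V)

lemma edgeBoundary_eq_sum_ncard :
    edgeBoundary G U = ∑ u ∈ U, (G.neighborSet u \ U).ncard := by
  classical
  have := Fintype.ofFinite V
  have hset : {p : V × V | p.1 ∈ (U : Set V) ∧ p.2 ∉ (U : Set V) ∧ G.Adj p.1 p.2} =
      (((U.sigma fun u => (G.neighborSet u \ U).toFinset).image fun p => (p.1, p.2) :
        Finset (V × V)) : Set (V × V)) := by
    ext ⟨u, w⟩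
    simp [and_comm]
  rw [edgeBoundary, hset, Set.ncard_coe_finset, card_image_of_injective, card_sigma]
  · simp_rw [Set.ncard_eq_toFinset_card']
  · rintro ⟨a, b⟩ ⟨c, e⟩ h
    obtain ⟨rfl, rfl⟩ := Prod.mk.inj h
    rfl

lemma ncard_neighborSet_le_ncard_diff_add {u : V} (hu : u ∈ U) :
    (G.neighborSet u).ncard ≤ (G.neighborSet u \ U).ncard + (#U - 1) := by
  rw [← Set.ncard_inter_add_ncard_sdiff_eq_ncard (G.neighborSet u) U, add_comm]
  gcongr
  calc (G.neighborSet u ∩ U).ncard ≤ ((U : Set V) \ {u}).ncard :=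
        Set.ncard_le_ncard fun w ⟨hw, hwU⟩ => ⟨hwU, (G.ne_of_adj hw).symm⟩
    _ = #U - 1 := by rw [Set.ncard_sdiff_singleton_of_mem hu, Set.ncard_coe_finset]

lemma card_mul_le_edgeBoundary {d : ℕ} (hdeg : ∀ u ∈ U, d ≤ (G.neighborSet u).ncard) :
    #U * d ≤ #U * (#U - 1) + edgeBoundary G U := by
  rw [edgeBoundary_eq_sum_ncard]
  calc #U * d = ∑ _u ∈ U, d := by rw [sum_const, smul_eq_mul]
    _ ≤ ∑ u ∈ U, ((#U - 1) + (G.neighborSet u \ U).ncard) := sum_le_sum fun u hu =>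
        (hdeg u hu).trans ((ncard_neighborSet_le_ncard_diff_add G U hu).trans_eq (add_comm _ _))
    _ = _ := by rw [sum_add_distrib, sum_const, smul_eq_mul]

lemma one_sub_mul_card_le_edgeBoundary {d : ℕ} (hdeg : ∀ u ∈ U, d ≤ (G.neighborSet u).ncard)
    {ε : ℝ} (hU : (#U : ℝ) ≤ ε * d) :
    (1 - ε) * d * #U ≤ edgeBoundary G U := by
  have hcount : (#U * d : ℝ) ≤ #U * ↑(#U - 1) + edgeBoundary G U := by
    exact_mod_cast card_mul_le_edgeBoundary G U hdeg
  have hinside : (#U * ↑(#U - 1) : ℝ) ≤ #U * (ε * d) :=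
    mul_le_mul_of_nonneg_left ((Nat.cast_le.mpr (Nat.sub_le _ _)).trans hU) (Nat.cast_nonneg _)
  linarith

end EdgeBoundary

lemma SimpleGraph.ncard_support_eq_two_mul_ncard_edgeSet {V : Type*} [Finite V]
    {M : SimpleGraph V} (hM : ∀ a b c, M.Adj a b → M.Adj a c → b = c) :
    M.support.ncard = 2 * M.edgeSet.ncard := by
  classical
  have := Fintype.ofFinite V
  have hdeg : ∀ v, M.degree v = if v ∈ M.support then 1 else 0 := by
    intro v
    split_ifs with hv
    · obtain ⟨w, hw⟩ := hv
      rw [degree, card_eq_one]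
      exact ⟨w, eq_singleton_iff_unique_mem.mpr ⟨(M.mem_neighborFinset _ _).mpr hw,
        fun u hu => hM v u w ((M.mem_neighborFinset _ _).mp hu) hw⟩⟩
    · rw [degree, card_eq_zero, eq_empty_iff_forall_notMem]
      exact fun w hw => hv ⟨w, (M.mem_neighborFinset _ _).mp hw⟩
  rw [← coe_edgeFinset, Set.ncard_coe_finset, ← M.sum_degrees_eq_twice_card_edges]
  simp_rw [hdeg, sum_boole, Nat.cast_id, Set.ncard_eq_toFinset_card']
  congr 1
  ext v
  simp

section TightGraph

variable {d : ℕ} {VH : Type*} {H : SimpleGraph VH} {M : SimpleGraph (Fin (d + 1))}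

@[simp] lemma tightGraph_adj_inl_inl {u v : VH} :
    (tightGraph d H M).Adj (.inl u) (.inl v) ↔ H.Adj u v := by
  simp only [tightGraph, SimpleGraph.fromRel_adj]
  exact ⟨fun ⟨_, h⟩ => h.elim id (·.symm), fun h => ⟨by simpa using h.ne, .inl h⟩⟩

@[simp] lemma tightGraph_adj_inl_inr {u v : VH} {i : Fin (d + 1)} :
    (tightGraph d H M).Adj (.inl u) (.inr (v, i)) ↔ u = v ∧ i ∈ M.support := by
  simp [tightGraph]

@[simp] lemma tightGraph_adj_inr_inl {u v : VH} {i : Fin (d + 1)} :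
    (tightGraph d H M).Adj (.inr (v, i)) (.inl u) ↔ u = v ∧ i ∈ M.support := by
  rw [SimpleGraph.adj_comm, tightGraph_adj_inl_inr]

@[simp] lemma tightGraph_adj_inr_inr {u v : VH} {i j : Fin (d + 1)} :
    (tightGraph d H M).Adj (.inr (u, i)) (.inr (v, j)) ↔ u = v ∧ i ≠ j ∧ ¬M.Adj i j := by
  simp only [tightGraph, SimpleGraph.fromRel_adj]
  constructor
  · rintro ⟨-, ⟨rfl, hij, h⟩ | ⟨rfl, hij, h⟩⟩
    · exact ⟨rfl, hij, h⟩
    · exact ⟨rfl, hij.symm, fun h' => h h'.symm⟩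
  · rintro ⟨rfl, hij, h⟩
    exact ⟨by simp [hij], .inl ⟨rfl, hij, h⟩⟩

lemma tightGraph_neighborSet_inl (v : VH) :
    (tightGraph d H M).neighborSet (.inl v) =
      Sum.inl '' H.neighborSet v ∪ (fun i => .inr (v, i)) '' M.support := by
  ext (w | ⟨u, i⟩) <;> simp [eq_comm, and_comm]

lemma ncard_tightGraph_neighborSet_inl [Finite VH] (v : VH) :
    ((tightGraph d H M).neighborSet (.inl v)).ncard =
      (H.neighborSet v).ncard + M.support.ncard := by
  rw [tightGraph_neighborSet_inl, Set.ncard_union_eq,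
    Set.ncard_image_of_injective _ Sum.inl_injective, Set.ncard_image_of_injective]
  · exact fun i j h => by simpa using h
  · exact Set.disjoint_left.mpr (by simp)

lemma le_ncard_tightGraph_neighborSet_inr [Finite VH]
    (hM : ∀ a b c, M.Adj a b → M.Adj a c → b = c) (v : VH) (i : Fin (d + 1)) :
    d ≤ ((tightGraph d H M).neighborSet (.inr (v, i))).ncard := by
  have hinj : Function.Injective fun k : Fin (d + 1) =>
      (Sum.inr (v, k) : VH ⊕ VH × Fin (d + 1)) :=
    fun k l h => by simpa using h
  by_cases hi : i ∈ M.support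
  · obtain ⟨j, hj : M.Adj i j⟩ := hi
    calc d = (insert (.inl v) ((fun k => .inr (v, k)) ''
          ({i, j}ᶜ : Set (Fin (d + 1))))).ncard := by
          rw [Set.ncard_insert_of_notMem (by simp), Set.ncard_image_of_injective _ hinj,
            Set.ncard_compl, Set.ncard_pair hj.ne, Nat.card_eq_fintype_card, Fintype.card_fin]
          have := Fin.val_ne_of_ne hj.ne
          omega
      _ ≤ _ := Set.ncard_le_ncard <| Set.insert_subset (by simpa using ⟨j, hj⟩) <| by
          rintro _ ⟨k, hk, rfl⟩
          simp only [Set.mem_compl_iff, Set.mem_insert_iff, Set.mem_singleton_iff, not_or] at hk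
          exact (SimpleGraph.mem_neighborSet _ _ _).mpr <|
            tightGraph_adj_inr_inr.mpr ⟨rfl, Ne.symm hk.1, fun h => hk.2 (hM i k j h hj)⟩
  · calc d = ((fun k => .inr (v, k)) '' ({i}ᶜ : Set (Fin (d + 1)))).ncard := by
          rw [Set.ncard_image_of_injective _ hinj, Set.ncard_compl, Set.ncard_singleton,
            Nat.card_eq_fintype_card, Fintype.card_fin]
          omega
      _ ≤ _ := Set.ncard_le_ncard <| by
          rintro _ ⟨k, hk, rfl⟩
          exact (SimpleGraph.mem_neighborSet _ _ _).mpr <|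
            tightGraph_adj_inr_inr.mpr ⟨rfl, Ne.symm hk, fun h => hi ⟨k, h⟩⟩

lemma le_ncard_tightGraph_neighborSet [Finite VH] {d₁ : ℕ} (heven : Even (d - d₁))
    (hreg : ∀ u, (H.neighborSet u).ncard = d₁)
    (hM : ∀ a b c, M.Adj a b → M.Adj a c → b = c)
    (hMsize : M.edgeSet.ncard = (d - d₁) / 2) :
    ∀ x, d ≤ ((tightGraph d H M).neighborSet x).ncard
  | .inl v => by
    rw [ncard_tightGraph_neighborSet_inl, hreg,
      SimpleGraph.ncard_support_eq_two_mul_ncard_edgeSet hM, hMsize,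
      Nat.two_mul_div_two_of_even heven]
    omega
  | .inr (v, i) => le_ncard_tightGraph_neighborSet_inr hM v i

end TightGraph

theorem stmt_16_general {VH : Type*} [Fintype VH] (d d₁ : ℕ)
    (heven : Even (d - d₁))
    (H : SimpleGraph VH) (hreg : ∀ u : VH, (H.neighborSet u).ncard = d₁)
    (M : SimpleGraph (Fin (d + 1))) (hM : ∀ a b c, M.Adj a b → M.Adj a c → b = c)
    (hMsize : M.edgeSet.ncard = (d - d₁) / 2)
    (ε : ℝ) (hεd : ε * d / 3 + 1 ≤ ε * d) :
    ∀ U : Finset (VH ⊕ VH × Fin (d + 1)), (U.card : ℝ) ≤ ε * d / 3 →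
      (1 - ε) * d * U.card ≤ (edgeBoundary (tightGraph d H M) (U : Set _) : ℝ) := by
  intro U hU
  exact one_sub_mul_card_le_edgeBoundary _ U
    (fun x _ => le_ncard_tightGraph_neighborSet heven hreg hM hMsize x) (by linarith)

/-- If `H` satisfies the local expansion `e_H(U,Uᶜ) ≥ (1-ε)d₁|U|` for all `U` with
`|U| ≤ εd/3`, then the constructed graph `G` satisfies `e_G(U,Uᶜ) ≥ (1-ε)d|U|` for all
`U ⊆ V(G)` with `|U| ≤ εd/3`. -/
theorem stmt_16 {VH : Type*} [Fintype VH] [DecidableEq VH] (d d₁ : ℕ)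
    (hd₁ : 0 < d₁) (hdd : d₁ < d) (heven : Even (d - d₁))
    (H : SimpleGraph VH) (hreg : ∀ u : VH, (H.neighborSet u).ncard = d₁)
    (M : SimpleGraph (Fin (d + 1))) (hM : ∀ a b c, M.Adj a b → M.Adj a c → b = c)
    (hMsize : M.edgeSet.ncard = (d - d₁) / 2)
    (ε : ℝ) (hε0 : 0 < ε) (hε1 : ε < 1) (hεd : ε * d / 3 + 1 ≤ ε * d)
    (hHexp : ∀ U : Finset VH, (U.card : ℝ) ≤ ε * d / 3 →
      (1 - ε) * d₁ * U.card ≤ (edgeBoundary H (U : Set VH) : ℝ)) :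
    ∀ U : Finset (VH ⊕ VH × Fin (d + 1)), (U.card : ℝ) ≤ ε * d / 3 →
      (1 - ε) * d * U.card ≤ (edgeBoundary (tightGraph d H M) (U : Set _) : ℝ) :=
  stmt_16_general d d₁ heven H hreg M hM hMsize ε hεd
end

section
/- For d = (19/10)·d₁, n ≥ d², p with (1-p)^d = 1/(n log d), and m = n/(d+2) disjoint sets each joined to the rest by exactly d - d₁ = (9/19)d edges, the probability that all m sets have a retained boundary edge is at most exp(-(n/(d+2))·(n log d)^(-9/19)), which tends to 0 when d ≤ √n and d → ∞. -/
open Filter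

/-- For `d ≤ √n` with `d → ∞`, the bound
`exp(-(n/(d+2))·(n log d)^(-9/19))` tends to `0`. -/
theorem stmt_17 (n d : ℕ → ℝ) (hd : Tendsto d atTop atTop)
    (hd3 : ∀ k, 3 ≤ d k) (hdn : ∀ k, d k ≤ Real.sqrt (n k)) :
    Tendsto (fun k =>
        Real.exp (-(n k / (d k + 2)) * (n k * Real.log (d k)) ^ (-(9 : ℝ) / 19)))
      atTop (nhds 0) := by
  have hdsq : ∀ k, d k ^ 2 ≤ n k := by
    intro k
    exact (Real.le_sqrt' (by linarith [hd3 k])).mp (hdn k)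
  have hn9 : ∀ k, (9:ℝ) ≤ n k := fun k => by nlinarith [hdsq k, hd3 k]
  have htn : Tendsto n atTop atTop := by
    apply tendsto_atTop_mono (fun k => ?_) hd
    nlinarith [hdsq k, hd3 k]
  -- eventually log (d k) ≤ d k ^ (1/10)
  have hlog : ∀ᶠ k in atTop, Real.log (d k) ≤ d k ^ ((1:ℝ)/10) := by
    have h := (isLittleO_log_rpow_atTop (by norm_num : (0:ℝ) < 1/10)).bound
      (by norm_num : (0:ℝ) < 1)
    filter_upwards [hd.eventually h, hd.eventually_ge_atTop 1] with k hk hk1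
    calc Real.log (d k) ≤ |Real.log (d k)| := le_abs_self _
      _ ≤ 1 * ‖d k ^ ((1:ℝ)/10)‖ := hk
      _ = d k ^ ((1:ℝ)/10) := by
          rw [one_mul, Real.norm_eq_abs, abs_of_nonneg (Real.rpow_nonneg (by linarith) _)]
  -- main lower bound, eventually
  have key : ∀ᶠ k in atTop,
      (n k) ^ ((1:ℝ)/380) / 2 ≤
        (n k / (d k + 2)) * (n k * Real.log (d k)) ^ (-(9 : ℝ) / 19) := by
    filter_upwards [hlog] with k hlk
    set a := n k with ha
    set b := d k with hb
    have hb3 : (3:ℝ) ≤ b := hd3 k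
    have ha9 : (9:ℝ) ≤ a := hn9 k
    have ha0 : (0:ℝ) < a := by linarith
    have hlb : (1:ℝ) ≤ Real.log b := by
      have : Real.exp 1 ≤ b := by
        have := Real.exp_one_lt_d9
        linarith
      calc (1:ℝ) = Real.log (Real.exp 1) := (Real.log_exp 1).symm
        _ ≤ Real.log b := Real.log_le_log (Real.exp_pos 1) this
    have hbsa : b ≤ a ^ ((1:ℝ)/2) := by
      calc b ≤ Real.sqrt a := hdn k
        _ = a ^ ((1:ℝ)/2) := Real.sqrt_eq_rpow a
    -- a * log b ≤ a ^ (21/20)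
    have h1 : a * Real.log b ≤ a ^ ((21:ℝ)/20) := by
      have hb10 : b ^ ((1:ℝ)/10) ≤ a ^ ((1:ℝ)/20) := by
        calc b ^ ((1:ℝ)/10) ≤ (a ^ ((1:ℝ)/2)) ^ ((1:ℝ)/10) :=
              Real.rpow_le_rpow (by linarith) hbsa (by norm_num)
          _ = a ^ ((1:ℝ)/20) := by
              rw [← Real.rpow_mul ha0.le]; norm_num
      calc a * Real.log b ≤ a * a ^ ((1:ℝ)/20) :=
            mul_le_mul_of_nonneg_left (hlk.trans hb10) ha0.le
        _ = a ^ (1:ℝ) * a ^ ((1:ℝ)/20) := by rw [Real.rpow_one]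
        _ = a ^ ((21:ℝ)/20) := by rw [← Real.rpow_add ha0]; norm_num
    have hpos : (0:ℝ) < a * Real.log b := by positivity
    have h2 : (a ^ ((21:ℝ)/20)) ^ (-(9:ℝ)/19) ≤ (a * Real.log b) ^ (-(9:ℝ)/19) :=
      Real.rpow_le_rpow_of_nonpos hpos h1 (by norm_num)
    have h2' : a ^ (-(189:ℝ)/380) ≤ (a * Real.log b) ^ (-(9:ℝ)/19) := by
      rw [← Real.rpow_mul ha0.le] at h2
      convert h2 using 2
      norm_num
    have h3 : a ^ ((1:ℝ)/2) / 2 ≤ a / (b + 2) := by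
      rw [div_le_div_iff₀ (by norm_num) (by linarith)]
      have : a ^ ((1:ℝ)/2) * b ≤ a := by
        calc a ^ ((1:ℝ)/2) * b ≤ a ^ ((1:ℝ)/2) * a ^ ((1:ℝ)/2) :=
              mul_le_mul_of_nonneg_left hbsa (by positivity)
          _ = a := by rw [← Real.rpow_add ha0]; norm_num
      nlinarith [Real.rpow_nonneg ha0.le ((1:ℝ)/2), hbsa]
    calc a ^ ((1:ℝ)/380) / 2 = (a ^ ((1:ℝ)/2) / 2) * a ^ (-(189:ℝ)/380) := by
          rw [div_mul_eq_mul_div, ← Real.rpow_add ha0]; norm_num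
      _ ≤ (a / (b + 2)) * (a * Real.log b) ^ (-(9:ℝ)/19) := by
          apply mul_le_mul h3 h2' (by positivity)
          positivity
  have hx : Tendsto (fun k => (n k / (d k + 2)) * (n k * Real.log (d k)) ^ (-(9 : ℝ) / 19))
      atTop atTop := by
    apply tendsto_atTop_mono' _ key
    exact ((tendsto_rpow_atTop (by norm_num : (0:ℝ) < 1/380)).comp htn).atTop_div_const
      (by norm_num)
  have : Tendsto (fun k => -(n k / (d k + 2)) * (n k * Real.log (d k)) ^ (-(9 : ℝ) / 19))
      atTop atBot := by
    simpa [neg_mul] using hx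
  exact Real.tendsto_exp_atBot.comp this
end
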